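/- On each merit-order partition interval, the optimal dispatch cost is affine in demand with slope equal to the marginal generator's cost: if ρ₁ ≤ ⋯ ≤ ρₙ and ŷ ∈ [∑_{k<o} p̄ₖ, ∑_{k≤o} p̄ₖ], then the optimal value of min { ρᵀp : 1ᵀp = ŷ, 0 ≤ p ≤ p̄ } equals ∑_{k<o} ρₖ p̄ₖ + ρ_o (ŷ − ∑_{k<o} p̄ₖ). -/
import Mathlib


/-- On each merit-order partition interval the optimal dispatch cost is affine in
  demand: if ρ₁ ≤ ⋯ ≤ ρₙ and ∑_{k<o} p̄ₖ ≤ yhat ≤ ∑_{k≤o} p̄ₖ, the optimal value of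
  min { ρᵀp : 1ᵀp = yhat, 0 ≤ p ≤ p̄ } equals
  ∑_{k<o} ρₖ p̄ₖ + ρ_o (yhat − ∑_{k<o} p̄ₖ). -/
theorem stmt_8 (n : ℕ) (ρ pbar : Fin n → ℝ) (hpbar : ∀ i, 0 ≤ pbar i)
    (hρ : ∀ i j : Fin n, i ≤ j → ρ i ≤ ρ j)
    (o : Fin n) (yhat : ℝ)
    (hy0 : ∑ k ∈ Finset.univ.filter (· < o), pbar k ≤ yhat)
    (hy1 : yhat ≤ ∑ k ∈ Finset.univ.filter (· ≤ o), pbar k) :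
    IsLeast { v : ℝ | ∃ p : Fin n → ℝ,
        (∑ i, p i = yhat) ∧ (∀ i, 0 ≤ p i) ∧ (∀ i, p i ≤ pbar i) ∧
        v = ∑ i, ρ i * p i }
      ((∑ k ∈ Finset.univ.filter (· < o), ρ k * pbar k) +
        ρ o * (yhat - ∑ k ∈ Finset.univ.filter (· < o), pbar k)) := by
  have hnotmem : o ∉ Finset.univ.filter (· < o) := by simp
  have hkey : Finset.univ.filter (· ≤ o) = insert o (Finset.univ.filter (· < o)) := by
    ext i
    simp [le_iff_lt_or_eq, or_comm]
  have hle : ∑ k ∈ Finset.univ.filter (· ≤ o), pbar k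
      = pbar o + ∑ k ∈ Finset.univ.filter (· < o), pbar k := by
    rw [hkey, Finset.sum_insert hnotmem]
  have hyo : yhat - ∑ k ∈ Finset.univ.filter (· < o), pbar k ≤ pbar o := by linarith
  have hyo0 : 0 ≤ yhat - ∑ k ∈ Finset.univ.filter (· < o), pbar k := by linarith
  constructor
  · refine ⟨fun i => if i < o then pbar i else if i = o then
        yhat - ∑ k ∈ Finset.univ.filter (· < o), pbar k else 0, ?_, ?_, ?_, ?_⟩
    · have hspl := Finset.sum_filter_add_sum_filter_not Finset.univ (· < o)
        (fun i => if i < o then pbar i else if i = o then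
          yhat - ∑ k ∈ Finset.univ.filter (· < o), pbar k else 0)
      rw [← hspl]
      have h1 : ∑ i ∈ Finset.univ.filter (· < o),
          (fun i => if i < o then pbar i else if i = o then
            yhat - ∑ k ∈ Finset.univ.filter (· < o), pbar k else 0) i
          = ∑ k ∈ Finset.univ.filter (· < o), pbar k := by
        apply Finset.sum_congr rfl
        intro i hi
        simp only
        rw [if_pos (by simpa using hi)]
      have h2 : ∑ i ∈ Finset.univ.filter (fun i => ¬ (· < o) i),
          (fun i => if i < o then pbar i else if i = o then
            yhat - ∑ k ∈ Finset.univ.filter (· < o), pbar k else 0) i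
          = yhat - ∑ k ∈ Finset.univ.filter (· < o), pbar k := by
        have hcong : ∀ i ∈ Finset.univ.filter (fun i => ¬ (· < o) i),
            (fun i => if i < o then pbar i else if i = o then
              yhat - ∑ k ∈ Finset.univ.filter (· < o), pbar k else 0) i
            = if i = o then (fun _ : Fin n =>
                yhat - ∑ k ∈ Finset.univ.filter (· < o), pbar k) i else 0 := by
          intro i hi
          simp only
          rw [if_neg (by simpa using (Finset.mem_filter.mp hi).2)]
        rw [Finset.sum_congr rfl hcong, Finset.sum_ite_eq']
        simp [lt_irrefl]
      rw [h1, h2]; ring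
    · intro i
      by_cases h : i < o
      · simpa [h] using hpbar i
      · by_cases h' : i = o <;> simp [h, h', hyo0]
    · intro i
      by_cases h : i < o
      · simp [h]
      · by_cases h' : i = o
        · subst h'; simpa [h] using hyo
        · simpa [h, h'] using hpbar i
    · have hspl := Finset.sum_filter_add_sum_filter_not Finset.univ (· < o)
        (fun i => ρ i * (if i < o then pbar i else if i = o then
          yhat - ∑ k ∈ Finset.univ.filter (· < o), pbar k else 0))
      simp only at hspl ⊢
      rw [← hspl]
      have h1 : ∑ i ∈ Finset.univ.filter (· < o),
          ρ i * (if i < o then pbar i else if i = o then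
            yhat - ∑ k ∈ Finset.univ.filter (· < o), pbar k else 0)
          = ∑ k ∈ Finset.univ.filter (· < o), ρ k * pbar k := by
        apply Finset.sum_congr rfl
        intro i hi
        rw [if_pos (by simpa using hi)]
      have h2 : ∑ i ∈ Finset.univ.filter (fun i => ¬ (· < o) i),
          ρ i * (if i < o then pbar i else if i = o then
            yhat - ∑ k ∈ Finset.univ.filter (· < o), pbar k else 0)
          = ρ o * (yhat - ∑ k ∈ Finset.univ.filter (· < o), pbar k) := by
        have hcong : ∀ i ∈ Finset.univ.filter (fun i => ¬ (· < o) i),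
            ρ i * (if i < o then pbar i else if i = o then
              yhat - ∑ k ∈ Finset.univ.filter (· < o), pbar k else 0)
            = if i = o then (fun j => ρ j *
                (yhat - ∑ k ∈ Finset.univ.filter (· < o), pbar k)) i else 0 := by
          intro i hi
          rw [if_neg (by simpa using (Finset.mem_filter.mp hi).2)]
          split_ifs <;> ring
        rw [Finset.sum_congr rfl hcong, Finset.sum_ite_eq']
        simp [lt_irrefl]
      rw [h1, h2]
  · rintro v ⟨p, hsum, hpos, hub, rfl⟩
    have hsplit := Finset.sum_filter_add_sum_filter_not Finset.univ (· < o) p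
    have hsplit' := Finset.sum_filter_add_sum_filter_not Finset.univ (· < o)
      (fun i => ρ i * p i)
    have hstep1 : ∑ i ∈ Finset.univ.filter (fun i => ¬ (· < o) i), ρ o * p i
        ≤ ∑ i ∈ Finset.univ.filter (fun i => ¬ (· < o) i), ρ i * p i := by
      apply Finset.sum_le_sum
      intro i hi
      have : o ≤ i := le_of_not_gt (by simpa using (Finset.mem_filter.mp hi).2)
      exact mul_le_mul_of_nonneg_right (hρ o i this) (hpos i)
    have hstep2 : ∑ i ∈ Finset.univ.filter (fun i => ¬ (· < o) i), ρ o * p i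
        = ρ o * (yhat - ∑ i ∈ Finset.univ.filter (· < o), p i) := by
      rw [← Finset.mul_sum]
      congr 1
      linarith
    have hstep3 : (∑ k ∈ Finset.univ.filter (· < o), ρ k * pbar k)
        + ρ o * (yhat - ∑ k ∈ Finset.univ.filter (· < o), pbar k)
        ≤ (∑ k ∈ Finset.univ.filter (· < o), ρ k * p k)
        + ρ o * (yhat - ∑ i ∈ Finset.univ.filter (· < o), p i) := by
      have hmain : ∑ k ∈ Finset.univ.filter (· < o), (ρ k * pbar k - ρ k * p k)
          ≤ ∑ k ∈ Finset.univ.filter (· < o), (ρ o * pbar k - ρ o * p k) := by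
        apply Finset.sum_le_sum
        intro i hi
        have hio : i < o := by simpa using hi
        have h1 : ρ i ≤ ρ o := hρ i o (le_of_lt hio)
        have h2 : 0 ≤ pbar i - p i := by linarith [hub i]
        nlinarith
      have e1 : ∑ k ∈ Finset.univ.filter (· < o), (ρ k * pbar k - ρ k * p k)
          = (∑ k ∈ Finset.univ.filter (· < o), ρ k * pbar k)
            - ∑ k ∈ Finset.univ.filter (· < o), ρ k * p k := by
        rw [Finset.sum_sub_distrib]
      have e2 : ∑ k ∈ Finset.univ.filter (· < o), (ρ o * pbar k - ρ o * p k)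
          = ρ o * (∑ k ∈ Finset.univ.filter (· < o), pbar k)
            - ρ o * ∑ k ∈ Finset.univ.filter (· < o), p k := by
        rw [Finset.sum_sub_distrib, ← Finset.mul_sum, ← Finset.mul_sum]
      rw [e1, e2] at hmain
      linarith
    calc (∑ k ∈ Finset.univ.filter (· < o), ρ k * pbar k)
        + ρ o * (yhat - ∑ k ∈ Finset.univ.filter (· < o), pbar k)
        ≤ (∑ k ∈ Finset.univ.filter (· < o), ρ k * p k)
          + ρ o * (yhat - ∑ i ∈ Finset.univ.filter (· < o), p i) := hstep3
      _ = (∑ k ∈ Finset.univ.filter (· < o), ρ k * p k)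
          + ∑ i ∈ Finset.univ.filter (fun i => ¬ (· < o) i), ρ o * p i := by rw [hstep2]
      _ ≤ (∑ k ∈ Finset.univ.filter (· < o), ρ k * p k)
          + ∑ i ∈ Finset.univ.filter (fun i => ¬ (· < o) i), ρ i * p i := by linarith
      _ = ∑ i, ρ i * p i := hsplit'
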